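/- If n ≥ 2m − 1 and m ≥ 2, then the game Z-domination number and the game L-domination number of the Cartesian product of complete graphs K_m and K_n both equal 2m − 1: γ_Zg(K_m □ K_n) = γ_Lg(K_m □ K_n) = 2m − 1. -/

import Mathlib

open Finset

open scoped Classical

noncomputable section

namespace ZGamePaper

variable {V : Type*} {W : Type*}

/-- The closed neighborhood `N[v]` of a vertex as a `Finset`. -/
def closedNF [Fintype V] (G : SimpleGraph V) (v : V) : Finset V :=
  Finset.univ.filter fun x => x = v ∨ G.Adj v x

/-- The open neighborhood `N(v)` of a vertex as a `Finset`. -/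
def openNF [Fintype V] (G : SimpleGraph V) (v : V) : Finset V :=
  Finset.univ.filter fun x => G.Adj v x

lemma openNF_subset_closedNF [Fintype V] (G : SimpleGraph V) (v : V) :
    openNF G v ⊆ closedNF G v := by
  intro x hx
  simp only [openNF, closedNF, mem_filter] at hx ⊢
  exact ⟨hx.1, Or.inr hx.2⟩

lemma measure_dec [Fintype V] {A C : Finset V} {w : V} (hw : w ∈ C) (hwA : w ∉ A) :
    (Finset.univ \ (A ∪ C)).card < (Finset.univ \ A).card := by
  apply Finset.card_lt_card
  rw [Finset.ssubset_iff_of_subset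
    (Finset.sdiff_subset_sdiff (le_refl _) Finset.subset_union_left)]
  refine ⟨w, ?_, ?_⟩
  · simp [hwA]
  · simp [hw]

/-! ### The Z-domination game -/

/-- The set of legal moves in the Z-domination game, given the set `A` of
already dominated vertices: a vertex `v` is legal if `N(v) ⊄ A`. -/
def zLegal [Fintype V] (G : SimpleGraph V) (A : Finset V) : Finset V :=
  Finset.univ.filter fun v => ¬ openNF G v ⊆ A

lemma zLegal_dec [Fintype V] (G : SimpleGraph V) (A : Finset V) {v : V}
    (hv : v ∈ zLegal G A) :
    (Finset.univ \ (A ∪ closedNF G v)).card < (Finset.univ \ A).card := by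
  simp only [zLegal, mem_filter] at hv
  obtain ⟨w, hw1, hw2⟩ := Finset.not_subset.mp hv.2
  exact measure_dec (openNF_subset_closedNF G v hw1) hw2

/-- The optimal number of remaining moves in the Z-domination game played on `G`,
where `A` is the set of already dominated vertices and `turn = true` iff it is
Dominator's (the minimizer's) turn. -/
def zVal [Fintype V] (G : SimpleGraph V) (turn : Bool) (A : Finset V) : ℕ :=
  if h : (zLegal G A).Nonempty then
    if turn then
      1 + ((zLegal G A).attach.inf' h.attach fun v => zVal G false (A ∪ closedNF G v.1))
    else
      1 + ((zLegal G A).attach.sup' h.attach fun v => zVal G true (A ∪ closedNF G v.1))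
  else 0
termination_by (Finset.univ \ A).card
decreasing_by
  · exact zLegal_dec G A v.2
  · exact zLegal_dec G A v.2

/-- The game Z-domination number `γ_Zg(G)` (Dominator starts). -/
def gammaZg [Fintype V] (G : SimpleGraph V) : ℕ := zVal G true ∅

/-- The Staller-start game Z-domination number `γ'_Zg(G)`. -/
def gammaZg' [Fintype V] (G : SimpleGraph V) : ℕ := zVal G false ∅

/-! ### The (ordinary) domination game -/

/-- The set of legal moves in the domination game: `v` is legal if `N[v] ⊄ A`.
This set is nonempty if and only if `A ≠ V(G)`. -/
def dLegal [Fintype V] (G : SimpleGraph V) (A : Finset V) : Finset V :=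
  Finset.univ.filter fun v => ¬ closedNF G v ⊆ A

lemma dLegal_dec [Fintype V] (G : SimpleGraph V) (A : Finset V) {v : V}
    (hv : v ∈ dLegal G A) :
    (Finset.univ \ (A ∪ closedNF G v)).card < (Finset.univ \ A).card := by
  simp only [dLegal, mem_filter] at hv
  obtain ⟨w, hw1, hw2⟩ := Finset.not_subset.mp hv.2
  exact measure_dec hw1 hw2

/-- The optimal number of remaining moves in the domination game on `G`, with `A`
the set of already dominated vertices; `turn = true` iff it is Dominator's turn.
(There is no legal move iff `A = V(G)`.) -/
def dVal [Fintype V] (G : SimpleGraph V) (turn : Bool) (A : Finset V) : ℕ :=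
  if h : (dLegal G A).Nonempty then
    if turn then
      1 + ((dLegal G A).attach.inf' h.attach fun v => dVal G false (A ∪ closedNF G v.1))
    else
      1 + ((dLegal G A).attach.sup' h.attach fun v => dVal G true (A ∪ closedNF G v.1))
  else 0
termination_by (Finset.univ \ A).card
decreasing_by
  · exact dLegal_dec G A v.2
  · exact dLegal_dec G A v.2

/-- The game domination number `γ_g(G)` (Dominator starts). -/
def gammaGg [Fintype V] (G : SimpleGraph V) : ℕ := dVal G true ∅

/-- The Staller-start game domination number `γ'_g(G)`. -/
def gammaGg' [Fintype V] (G : SimpleGraph V) : ℕ := dVal G false ∅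

/-! ### The total domination game -/

/-- The set of legal moves in the total domination game: `v` is legal if `N(v) ⊄ B`.
For a graph without isolated vertices this set is nonempty iff `B ≠ V(G)`. -/
def tLegal [Fintype V] (G : SimpleGraph V) (B : Finset V) : Finset V :=
  Finset.univ.filter fun v => ¬ openNF G v ⊆ B

lemma tLegal_dec [Fintype V] (G : SimpleGraph V) (B : Finset V) {v : V}
    (hv : v ∈ tLegal G B) :
    (Finset.univ \ (B ∪ openNF G v)).card < (Finset.univ \ B).card := by
  simp only [tLegal, mem_filter] at hv
  obtain ⟨w, hw1, hw2⟩ := Finset.not_subset.mp hv.2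
  exact measure_dec hw1 hw2

/-- The optimal number of remaining moves in the total domination game on `G`,
with `B` the set of already totally dominated vertices; `turn = true` iff it is
Dominator's turn. -/
def tVal [Fintype V] (G : SimpleGraph V) (turn : Bool) (B : Finset V) : ℕ :=
  if h : (tLegal G B).Nonempty then
    if turn then
      1 + ((tLegal G B).attach.inf' h.attach fun v => tVal G false (B ∪ openNF G v.1))
    else
      1 + ((tLegal G B).attach.sup' h.attach fun v => tVal G true (B ∪ openNF G v.1))
  else 0
termination_by (Finset.univ \ B).card
decreasing_by
  · exact tLegal_dec G B v.2
  · exact tLegal_dec G B v.2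

/-- The game total domination number `γ_tg(G)` (Dominator starts). -/
def gammaTg [Fintype V] (G : SimpleGraph V) : ℕ := tVal G true ∅

/-! ### The L-domination game -/

/-- The set of legal moves in the L-domination game, given the set `P` of vertices
played so far: `v` is legal if `v ∉ P` and `N[v] ⊄ N(P)`. -/
def lLegal [Fintype V] (G : SimpleGraph V) (P : Finset V) : Finset V :=
  Finset.univ.filter fun v => v ∉ P ∧ ¬ closedNF G v ⊆ P.biUnion (openNF G)

lemma lLegal_dec [Fintype V] (G : SimpleGraph V) (P : Finset V) {v : V}
    (hv : v ∈ lLegal G P) :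
    (Finset.univ \ insert v P).card < (Finset.univ \ P).card := by
  simp only [lLegal, mem_filter] at hv
  apply Finset.card_lt_card
  rw [Finset.ssubset_iff_of_subset
    (Finset.sdiff_subset_sdiff (le_refl _) (Finset.subset_insert _ _))]
  exact ⟨v, by simp [hv.2.1], by simp⟩

/-- The optimal number of remaining moves in the L-domination game on `G`, with `P`
the set of vertices played so far; `turn = true` iff it is Dominator's turn. -/
def lVal [Fintype V] (G : SimpleGraph V) (turn : Bool) (P : Finset V) : ℕ :=
  if h : (lLegal G P).Nonempty then
    if turn then
      1 + ((lLegal G P).attach.inf' h.attach fun v => lVal G false (insert v.1 P))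
    else
      1 + ((lLegal G P).attach.sup' h.attach fun v => lVal G true (insert v.1 P))
  else 0
termination_by (Finset.univ \ P).card
decreasing_by
  · exact lLegal_dec G P v.2
  · exact lLegal_dec G P v.2

/-- The game L-domination number `γ_Lg(G)` (Dominator starts). -/
def gammaLg [Fintype V] (G : SimpleGraph V) : ℕ := lVal G true ∅

/-! ### Domination number and related notions -/

/-- The domination number `γ(G)`: the minimum size of a set `S` with `N[S] = V(G)`. -/
def gammaNum [Fintype V] (G : SimpleGraph V) : ℕ :=
  sInf {k | ∃ S : Finset V, S.card = k ∧ ∀ v : V, ∃ u ∈ S, v ∈ closedNF G u}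

/-- The partially dominated graph `G|A` has a Z-configuration if there is an
undominated vertex `v` all of whose neighbors are dominated, while every neighbor
of `v` has at least two undominated neighbors. -/
def HasZConfig [Fintype V] (G : SimpleGraph V) (A : Finset V) : Prop :=
  ∃ v : V, v ∉ A ∧ openNF G v ⊆ A ∧ ∀ u ∈ openNF G v, 2 ≤ (openNF G u \ A).card

/-- A graph without isolated vertices is Z-insensitive if for every `D ⊆ V(G)` the
partially dominated graph `G|N[D]` has no Z-configuration. -/
def ZInsensitive [Fintype V] (G : SimpleGraph V) : Prop :=
  (∀ v : V, ∃ u : V, G.Adj v u) ∧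
    ∀ D : Finset V, ¬ HasZConfig G (D.biUnion (closedNF G))

/-- A vertex `w` is the center of a claw if it has three pairwise non-adjacent
neighbors. -/
def IsClawCenter (G : SimpleGraph V) (w : V) : Prop :=
  ∃ a b c : V, G.Adj w a ∧ G.Adj w b ∧ G.Adj w c ∧ a ≠ b ∧ a ≠ c ∧ b ≠ c ∧
    ¬ G.Adj a b ∧ ¬ G.Adj a c ∧ ¬ G.Adj b c

/-- A graph is weakly claw-free if every vertex has a neighbor that is not the
center of a claw. -/
def WeaklyClawFree (G : SimpleGraph V) : Prop :=
  ∀ v : V, ∃ u : V, G.Adj v u ∧ ¬ IsClawCenter G u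

/-- The lexicographic product `G ∘ H`. -/
def lexProd (G : SimpleGraph V) (H : SimpleGraph W) : SimpleGraph (V × W) where
  Adj p q := G.Adj p.1 q.1 ∨ (p.1 = q.1 ∧ H.Adj p.2 q.2)
  symm := by
    refine ⟨?_⟩
    rintro p q (h | ⟨h1, h2⟩)
    · exact Or.inl h.symm
    · exact Or.inr ⟨h1.symm, h2.symm⟩
  loopless := by
    refine ⟨?_⟩
    rintro p (h | ⟨_, h⟩)
    · exact G.loopless.irrefl _ h
    · exact H.loopless.irrefl _ h

/-!
In the rook's graph `K_m □ K_n` a move dominates its row and its column. Dominator can complete a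
new row with each of his moves (in the L-game: by playing down a fixed column), so at most
`2m - 1` moves are made. Conversely, in the Z-game the undominated cells always form a block
`S × T`, and in the L-game the cells in rows and columns untouched by played vertices stay
undominated. A move removes at most one row and one column of the block, while Staller can always
answer in an already used row and remove a single column; hence at least `min (2m - 1) n` moves
are made.
-/

open SimpleGraph

section GameValue

variable [Fintype V] {G : SimpleGraph V}

lemma zVal_eq_zero {A : Finset V} (h : ¬ (zLegal G A).Nonempty) (t : Bool) :
    zVal G t A = 0 := by
  rw [zVal, dif_neg h]

lemma zVal_true_le {A : Finset V} {v : V} (hv : v ∈ zLegal G A) :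
    zVal G true A ≤ zVal G false (A ∪ closedNF G v) + 1 := by
  rw [zVal, dif_pos ⟨v, hv⟩, if_pos rfl, add_comm]
  exact Nat.add_le_add_right (inf'_le _ (mem_attach _ ⟨v, hv⟩)) 1

lemma zVal_false_le {A : Finset V} {k : ℕ}
    (h : ∀ v ∈ zLegal G A, zVal G true (A ∪ closedNF G v) ≤ k) :
    zVal G false A ≤ k + 1 := by
  by_cases hne : (zLegal G A).Nonempty
  · rw [zVal, dif_pos hne, if_neg Bool.false_ne_true, add_comm]
    exact Nat.add_le_add_right (sup'_le _ _ fun v _ => h v.1 v.2) 1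
  · simp [zVal_eq_zero hne]

lemma le_zVal_false {A : Finset V} {v : V} (hv : v ∈ zLegal G A) :
    zVal G true (A ∪ closedNF G v) + 1 ≤ zVal G false A := by
  conv_rhs => rw [zVal, dif_pos ⟨v, hv⟩, if_neg Bool.false_ne_true, add_comm]
  exact Nat.add_le_add_right (le_sup' (fun w : zLegal G A => zVal G true (A ∪ closedNF G w))
    (mem_attach _ ⟨v, hv⟩)) 1

lemma le_zVal_true {A : Finset V} {k : ℕ} (hne : (zLegal G A).Nonempty)
    (h : ∀ v ∈ zLegal G A, k ≤ zVal G false (A ∪ closedNF G v)) :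
    k + 1 ≤ zVal G true A := by
  rw [zVal, dif_pos hne, if_pos rfl, add_comm]
  exact Nat.add_le_add_left (le_inf' _ _ fun v _ => h v.1 v.2) 1

lemma lVal_eq_zero {P : Finset V} (h : ¬ (lLegal G P).Nonempty) (t : Bool) :
    lVal G t P = 0 := by
  rw [lVal, dif_neg h]

lemma lVal_true_le {P : Finset V} {v : V} (hv : v ∈ lLegal G P) :
    lVal G true P ≤ lVal G false (insert v P) + 1 := by
  rw [lVal, dif_pos ⟨v, hv⟩, if_pos rfl, add_comm]
  exact Nat.add_le_add_right (inf'_le _ (mem_attach _ ⟨v, hv⟩)) 1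

lemma lVal_false_le {P : Finset V} {k : ℕ}
    (h : ∀ v ∈ lLegal G P, lVal G true (insert v P) ≤ k) :
    lVal G false P ≤ k + 1 := by
  by_cases hne : (lLegal G P).Nonempty
  · rw [lVal, dif_pos hne, if_neg Bool.false_ne_true, add_comm]
    exact Nat.add_le_add_right (sup'_le _ _ fun v _ => h v.1 v.2) 1
  · simp [lVal_eq_zero hne]

lemma le_lVal_false {P : Finset V} {v : V} (hv : v ∈ lLegal G P) :
    lVal G true (insert v P) + 1 ≤ lVal G false P := by
  conv_rhs => rw [lVal, dif_pos ⟨v, hv⟩, if_neg Bool.false_ne_true, add_comm]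
  exact Nat.add_le_add_right (le_sup' (fun w : lLegal G P => lVal G true (insert w.1 P))
    (mem_attach _ ⟨v, hv⟩)) 1

lemma le_lVal_true {P : Finset V} {k : ℕ} (hne : (lLegal G P).Nonempty)
    (h : ∀ v ∈ lLegal G P, k ≤ lVal G false (insert v P)) :
    k + 1 ≤ lVal G true P := by
  rw [lVal, dif_pos hne, if_pos rfl, add_comm]
  exact Nat.add_le_add_left (le_inf' _ _ fun v _ => h v.1 v.2) 1

theorem zVal_le_of_potential (f : Finset V → ℕ)
    (hdom : ∀ A, (zLegal G A).Nonempty → ∃ v ∈ zLegal G A, f (A ∪ closedNF G v) < f A)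
    (hsta : ∀ A, ∀ v ∈ zLegal G A, f (A ∪ closedNF G v) ≤ f A) (A : Finset V) :
    zVal G true A ≤ 2 * f A - 1 := by
  suffices ∀ k A, f A ≤ k → zVal G true A ≤ 2 * k - 1 ∧ zVal G false A ≤ 2 * k from
    (this _ A le_rfl).1
  intro k
  induction k with
  | zero =>
    intro A hA
    have hno : ¬ (zLegal G A).Nonempty := fun hne => by
      obtain ⟨v, -, hv⟩ := hdom A hne
      omega
    simp [zVal_eq_zero hno]
  | succ k ih =>
    have htrue : ∀ A, f A ≤ k + 1 → zVal G true A ≤ 2 * k + 1 := by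
      intro A hA
      by_cases hne : (zLegal G A).Nonempty
      · obtain ⟨v, hv, hfv⟩ := hdom A hne
        have := (ih (A ∪ closedNF G v) (by omega)).2
        have := zVal_true_le hv
        omega
      · simp [zVal_eq_zero hne]
    intro A hA
    exact ⟨by grind, zVal_false_le fun v hv => htrue _ ((hsta A v hv).trans hA)⟩

theorem lVal_le_of_potential (f : Finset V → ℕ)
    (hdom : ∀ P, (lLegal G P).Nonempty → ∃ v ∈ lLegal G P, f (insert v P) < f P)
    (hsta : ∀ P, ∀ v ∈ lLegal G P, f (insert v P) ≤ f P) (P : Finset V) :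
    lVal G true P ≤ 2 * f P - 1 := by
  suffices ∀ k P, f P ≤ k → lVal G true P ≤ 2 * k - 1 ∧ lVal G false P ≤ 2 * k from
    (this _ P le_rfl).1
  intro k
  induction k with
  | zero =>
    intro P hP
    have hno : ¬ (lLegal G P).Nonempty := fun hne => by
      obtain ⟨v, -, hv⟩ := hdom P hne
      omega
    simp [lVal_eq_zero hno]
  | succ k ih =>
    have htrue : ∀ P, f P ≤ k + 1 → lVal G true P ≤ 2 * k + 1 := by
      intro P hP
      by_cases hne : (lLegal G P).Nonempty
      · obtain ⟨v, hv, hfv⟩ := hdom P hne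
        have := (ih (insert v P) (by omega)).2
        have := lVal_true_le hv
        omega
      · simp [lVal_eq_zero hne]
    intro P hP
    exact ⟨by grind, lVal_false_le fun v hv => htrue _ ((hsta P v hv).trans hP)⟩

end GameValue

section RookGraph

variable {α β : Type*}

def rookGraph (α β : Type*) : SimpleGraph (α × β) := (⊤ : SimpleGraph α) □ (⊤ : SimpleGraph β)

lemma rookGraph_adj {v x : α × β} :
    (rookGraph α β).Adj v x ↔ (x.1 = v.1 ∨ x.2 = v.2) ∧ x ≠ v := by
  rw [rookGraph, boxProd_adj]
  simp only [top_adj, ne_eq, Prod.ext_iff]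
  grind

variable [Fintype α] [Fintype β]

/-- The game definitions decide equality of vertices classically; on cells the same instance must be
found instead of `instDecidableEqProd`, or `insert`, `∪` and `biUnion` would not match theirs. -/
abbrev classicalDecidableEqProd (α β : Type*) : DecidableEq (α × β) :=
  fun a b => Classical.propDecidable (a = b)

attribute [local instance 2000] classicalDecidableEqProd

lemma mem_closedNF_rookGraph {v x : α × β} :
    x ∈ closedNF (rookGraph α β) v ↔ x.1 = v.1 ∨ x.2 = v.2 := by
  simp only [closedNF, mem_filter, mem_univ, true_and, rookGraph_adj]
  grind

lemma mem_openNF_rookGraph {v x : α × β} :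
    x ∈ openNF (rookGraph α β) v ↔ (x.1 = v.1 ∨ x.2 = v.2) ∧ x ≠ v := by
  simp only [openNF, mem_filter, mem_univ, true_and, rookGraph_adj]

def undominatedRows (A : Finset (α × β)) : Finset α := {i | ∃ j, (i, j) ∉ A}

lemma undominatedRows_anti {A B : Finset (α × β)} (h : A ⊆ B) :
    undominatedRows B ⊆ undominatedRows A := by
  intro i
  simp only [undominatedRows, mem_filter, mem_univ, true_and]
  exact fun ⟨j, hj⟩ => ⟨j, fun hA => hj (h hA)⟩

/-- Given an undominated cell `x`, Dominator dominates the whole row of `x` by playing another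
cell of that row. -/
lemma exists_mem_zLegal_undominatedRows_ssubset [Nontrivial β] {A : Finset (α × β)}
    (hne : (zLegal (rookGraph α β) A).Nonempty) :
    ∃ v ∈ zLegal (rookGraph α β) A,
      undominatedRows (A ∪ closedNF (rookGraph α β) v) ⊂ undominatedRows A := by
  obtain ⟨w, hw⟩ := hne
  simp only [zLegal, mem_filter, mem_univ, true_and, not_subset] at hw
  obtain ⟨x, -, hxA⟩ := hw
  obtain ⟨j, hj⟩ := exists_ne x.2
  refine ⟨(x.1, j), ?_, ?_⟩
  · simp only [zLegal, mem_filter, mem_univ, true_and, not_subset]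
    exact ⟨x, mem_openNF_rookGraph.2 ⟨Or.inl rfl, fun h => hj (congrArg Prod.snd h).symm⟩, hxA⟩
  · refine (ssubset_iff_of_subset (undominatedRows_anti subset_union_left)).2 ⟨x.1, ?_, ?_⟩
    · simp only [undominatedRows, mem_filter, mem_univ, true_and]
      exact ⟨x.2, hxA⟩
    · simp [undominatedRows, mem_closedNF_rookGraph]

theorem gammaZg_rookGraph_le [Nontrivial β] :
    gammaZg (rookGraph α β) ≤ 2 * Fintype.card α - 1 :=
  calc gammaZg (rookGraph α β) ≤ 2 * #(undominatedRows (∅ : Finset (α × β))) - 1 :=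
        zVal_le_of_potential (fun A => #(undominatedRows A))
          (fun _ hne => (exists_mem_zLegal_undominatedRows_ssubset hne).imp
            fun _ ⟨hv, hlt⟩ => ⟨hv, card_lt_card hlt⟩)
          (fun _ _ _ => card_le_card (undominatedRows_anti subset_union_left)) ∅
    _ ≤ 2 * Fintype.card α - 1 := by
        have := card_le_univ (undominatedRows (∅ : Finset (α × β)))
        omega

def unplayedInColumn (j : β) (P : Finset (α × β)) : Finset α := {i | (i, j) ∉ P}

omit [Fintype β] in
lemma unplayedInColumn_anti (j : β) {P Q : Finset (α × β)} (h : P ⊆ Q) :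
    unplayedInColumn j Q ⊆ unplayedInColumn j P := by
  intro i
  simp only [unplayedInColumn, mem_filter, mem_univ, true_and]
  exact fun hi hP => hi (h hP)

/-- A cell `x` outside `N(P)` lies in the closed neighbourhood of an unplayed cell of any given
column: otherwise that column, all of whose cells are then played, already dominates `x`. -/
lemma exists_notMem_mem_closedNF_rookGraph [Nontrivial α] (j : β) {P : Finset (α × β)}
    {x : α × β} (hx : x ∉ P.biUnion (openNF (rookGraph α β))) :
    ∃ i, (i, j) ∉ P ∧ x ∈ closedNF (rookGraph α β) (i, j) := by
  by_contra! h
  apply hx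
  by_cases hxj : x.2 = j
  · obtain ⟨i, hi⟩ := exists_ne x.1
    have hij : (i, j) ∈ P := by
      by_contra hij
      exact h i hij (mem_closedNF_rookGraph.2 (Or.inr hxj))
    exact mem_biUnion.2 ⟨(i, j), hij,
      mem_openNF_rookGraph.2 ⟨Or.inr hxj, fun he => hi (congrArg Prod.fst he).symm⟩⟩
  · have hxj' : (x.1, j) ∈ P := by
      by_contra hxj'
      exact h x.1 hxj' (mem_closedNF_rookGraph.2 (Or.inl rfl))
    exact mem_biUnion.2 ⟨(x.1, j), hxj',
      mem_openNF_rookGraph.2 ⟨Or.inl rfl, fun he => hxj (congrArg Prod.snd he)⟩⟩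

lemma exists_mem_lLegal_unplayedInColumn_ssubset [Nontrivial α] (j : β) {P : Finset (α × β)}
    (hne : (lLegal (rookGraph α β) P).Nonempty) :
    ∃ v ∈ lLegal (rookGraph α β) P, unplayedInColumn j (insert v P) ⊂ unplayedInColumn j P := by
  obtain ⟨w, hw⟩ := hne
  simp only [lLegal, mem_filter, mem_univ, true_and, not_subset] at hw
  obtain ⟨-, x, -, hxP⟩ := hw
  obtain ⟨i, hi, hx⟩ := exists_notMem_mem_closedNF_rookGraph j hxP
  refine ⟨(i, j), ?_, ?_⟩
  · simp only [lLegal, mem_filter, mem_univ, true_and, not_subset]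
    exact ⟨hi, x, hx, hxP⟩
  · refine (ssubset_iff_of_subset (unplayedInColumn_anti j (subset_insert _ _))).2 ⟨i, ?_, ?_⟩
    · simpa [unplayedInColumn] using hi
    · simp [unplayedInColumn]

theorem gammaLg_rookGraph_le [Nontrivial α] [Nonempty β] :
    gammaLg (rookGraph α β) ≤ 2 * Fintype.card α - 1 := by
  obtain ⟨j⟩ := ‹Nonempty β›
  calc gammaLg (rookGraph α β) ≤ 2 * #(unplayedInColumn j (∅ : Finset (α × β))) - 1 :=
        lVal_le_of_potential (fun P => #(unplayedInColumn j P))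
          (fun _ hne => (exists_mem_lLegal_unplayedInColumn_ssubset j hne).imp
            fun _ ⟨hv, hlt⟩ => ⟨hv, card_lt_card hlt⟩)
          (fun _ _ _ => card_le_card (unplayedInColumn_anti j (subset_insert _ _))) ∅
    _ ≤ 2 * Fintype.card α - 1 := by
        have := card_le_univ (unplayedInColumn j (∅ : Finset (α × β)))
        omega

lemma compl_product_union_closedNF_rookGraph (S : Finset α) (T : Finset β) (v : α × β) :
    (S ×ˢ T)ᶜ ∪ closedNF (rookGraph α β) v = (S.erase v.1 ×ˢ T.erase v.2)ᶜ := by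
  ext x
  simp only [mem_union, mem_compl, mem_product, mem_erase, mem_closedNF_rookGraph]
  tauto

lemma le_zVal_false_rookGraph {S : Finset α} {T : Finset β} {i : α} {j : β}
    (hS : S.Nonempty) (hi : i ∉ S) (hj : j ∈ T) :
    zVal (rookGraph α β) true (S ×ˢ T.erase j)ᶜ + 1 ≤ zVal (rookGraph α β) false (S ×ˢ T)ᶜ := by
  obtain ⟨s, hs⟩ := hS
  have hlegal : (i, j) ∈ zLegal (rookGraph α β) (S ×ˢ T)ᶜ := by
    simp only [zLegal, mem_filter, mem_univ, true_and, not_subset]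
    refine ⟨(s, j), mem_openNF_rookGraph.2 ⟨Or.inr rfl, ?_⟩, by simp [hs, hj]⟩
    rintro ⟨⟩
    exact hi hs
  have := le_zVal_false hlegal
  rwa [compl_product_union_closedNF_rookGraph, erase_eq_of_notMem hi] at this

theorem min_le_zVal_rookGraph [Nontrivial β] (S : Finset α) (T : Finset β) :
    min (2 * #S - 1) #T ≤ zVal (rookGraph α β) true (S ×ˢ T)ᶜ := by
  obtain rfl | ⟨i, hi⟩ := S.eq_empty_or_nonempty
  · simp
  obtain rfl | ⟨j, hj⟩ := T.eq_empty_or_nonempty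
  · simp
  obtain ⟨j', hj'⟩ := exists_ne j
  have hlegal : (i, j') ∈ zLegal (rookGraph α β) (S ×ˢ T)ᶜ := by
    simp only [zLegal, mem_filter, mem_univ, true_and, not_subset]
    exact ⟨(i, j), mem_openNF_rookGraph.2 ⟨Or.inl rfl, fun h => hj' (congrArg Prod.snd h).symm⟩,
      by simp [hi, hj]⟩
  suffices ∀ v ∈ zLegal (rookGraph α β) (S ×ˢ T)ᶜ, min (2 * #S - 1) #T - 1 ≤
      zVal (rookGraph α β) false ((S ×ˢ T)ᶜ ∪ closedNF (rookGraph α β) v) by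
    have := le_zVal_true ⟨_, hlegal⟩ this
    omega
  intro v _
  rw [compl_product_union_closedNF_rookGraph]
  have hS := pred_card_le_card_erase (s := S) (a := v.1)
  have hT := pred_card_le_card_erase (s := T) (a := v.2)
  obtain hS' | hS' := (S.erase v.1).eq_empty_or_nonempty
  · rw [hS', card_empty] at hS
    omega
  obtain hT' | ⟨j₁, hj₁⟩ := (T.erase v.2).eq_empty_or_nonempty
  · rw [hT', card_empty] at hT
    omega
  have hsta := le_zVal_false_rookGraph hS' (notMem_erase v.1 S) hj₁
  have hdom := min_le_zVal_rookGraph (S.erase v.1) ((T.erase v.2).erase j₁)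
  have := card_erase_of_mem hj₁
  omega
termination_by #S + #T
decreasing_by
  have := card_erase_le (s := S) (a := v.1)
  have := card_erase_lt_of_mem hj₁
  have := card_erase_le (s := T) (a := v.2)
  omega

theorem min_le_gammaZg_rookGraph [Nontrivial β] :
    min (2 * Fintype.card α - 1) (Fintype.card β) ≤ gammaZg (rookGraph α β) := by
  simpa [gammaZg] using min_le_zVal_rookGraph (univ : Finset α) (univ : Finset β)

lemma notMem_biUnion_openNF_rookGraph {P : Finset (α × β)} {x : α × β}
    (h₁ : x.1 ∉ P.image Prod.fst) (h₂ : x.2 ∉ P.image Prod.snd) :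
    x ∉ P.biUnion (openNF (rookGraph α β)) := by
  intro hx
  obtain ⟨p, hp, hxp⟩ := mem_biUnion.1 hx
  rcases (mem_openNF_rookGraph.1 hxp).1 with h | h
  · exact h₁ (mem_image.2 ⟨p, hp, h.symm⟩)
  · exact h₂ (mem_image.2 ⟨p, hp, h.symm⟩)

/-- A cell in a fresh column is a legal move as long as some row is also fresh: the cell in that
row and column is not yet dominated. -/
lemma le_lVal_false_rookGraph {P : Finset (α × β)} {i a : α} {j : β}
    (hi : i ∉ P.image Prod.fst) (hj : j ∉ P.image Prod.snd) :
    lVal (rookGraph α β) true (insert (a, j) P) + 1 ≤ lVal (rookGraph α β) false P := by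
  refine le_lVal_false ?_
  simp only [lLegal, mem_filter, mem_univ, true_and, not_subset]
  exact ⟨fun h => hj (mem_image.2 ⟨_, h, rfl⟩), (i, j), mem_closedNF_rookGraph.2 (Or.inr rfl),
    notMem_biUnion_openNF_rookGraph hi hj⟩

theorem min_le_lVal_rookGraph (P : Finset (α × β)) :
    min (2 * #(P.image Prod.fst)ᶜ - 1) #(P.image Prod.snd)ᶜ ≤ lVal (rookGraph α β) true P := by
  obtain h | ⟨i, hi⟩ := (P.image Prod.fst)ᶜ.eq_empty_or_nonempty
  · simp [h]
  obtain h | ⟨j, hj⟩ := (P.image Prod.snd)ᶜ.eq_empty_or_nonempty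
  · simp [h]
  rw [mem_compl] at hi hj
  have hlegal : (i, j) ∈ lLegal (rookGraph α β) P := by
    simp only [lLegal, mem_filter, mem_univ, true_and, not_subset]
    exact ⟨fun h => hi (mem_image.2 ⟨_, h, rfl⟩), (i, j), mem_closedNF_rookGraph.2 (Or.inl rfl),
      notMem_biUnion_openNF_rookGraph hi hj⟩
  suffices ∀ w ∈ lLegal (rookGraph α β) P, min (2 * #(P.image Prod.fst)ᶜ - 1)
      #(P.image Prod.snd)ᶜ - 1 ≤ lVal (rookGraph α β) false (insert w P) by
    have := le_lVal_true ⟨_, hlegal⟩ this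
    omega
  intro w hw
  have hrows : #(P.image Prod.fst)ᶜ - 1 ≤ #((insert w P).image Prod.fst)ᶜ := by
    rw [image_insert, compl_insert]
    exact pred_card_le_card_erase
  have hcols : #(P.image Prod.snd)ᶜ - 1 ≤ #((insert w P).image Prod.snd)ᶜ := by
    rw [image_insert, compl_insert]
    exact pred_card_le_card_erase
  obtain h | ⟨i₁, hi₁⟩ := ((insert w P).image Prod.fst)ᶜ.eq_empty_or_nonempty
  · rw [h, card_empty] at hrows
    omega
  obtain h | ⟨j₁, hj₁⟩ := ((insert w P).image Prod.snd)ᶜ.eq_empty_or_nonempty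
  · rw [h, card_empty] at hcols
    omega
  have hsta := le_lVal_false_rookGraph (a := w.1) ((mem_compl).1 hi₁) ((mem_compl).1 hj₁)
  have hdom := min_le_lVal_rookGraph (insert (w.1, j₁) (insert w P))
  have hrows_eq : (insert (w.1, j₁) (insert w P)).image Prod.fst = (insert w P).image Prod.fst := by
    rw [image_insert]
    exact insert_eq_of_mem (mem_image.2 ⟨w, mem_insert_self w P, rfl⟩)
  have hcols_eq : #((insert (w.1, j₁) (insert w P)).image Prod.snd)ᶜ =
      #((insert w P).image Prod.snd)ᶜ - 1 := by
    rw [image_insert, compl_insert, card_erase_of_mem hj₁]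
  rw [hrows_eq, hcols_eq] at hdom
  omega
termination_by #Pᶜ
decreasing_by
  have hwP : w ∉ P := by
    simp only [lLegal, mem_filter, mem_univ, true_and] at hw
    exact hw.1
  exact card_lt_card (compl_ssubset_compl.2 ((ssubset_insert hwP).trans_subset (subset_insert _ _)))

theorem min_le_gammaLg_rookGraph :
    min (2 * Fintype.card α - 1) (Fintype.card β) ≤ gammaLg (rookGraph α β) := by
  simpa [gammaLg] using min_le_lVal_rookGraph (∅ : Finset (α × β))

end RookGraph

/-- If `n ≥ 2m - 1` and `m ≥ 2`, then
`γ_Zg(K_m □ K_n) = γ_Lg(K_m □ K_n) = 2m - 1`. -/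
theorem gammaZg_gammaLg_boxProd_complete (m n : ℕ) (hm : 2 ≤ m) (hn : 2 * m - 1 ≤ n) :
    gammaZg ((⊤ : SimpleGraph (Fin m)).boxProd (⊤ : SimpleGraph (Fin n))) = 2 * m - 1 ∧
    gammaLg ((⊤ : SimpleGraph (Fin m)).boxProd (⊤ : SimpleGraph (Fin n))) = 2 * m - 1 := by
  have : Nontrivial (Fin m) := Fin.nontrivial_iff_two_le.2 hm
  have : Nontrivial (Fin n) := Fin.nontrivial_iff_two_le.2 (by omega)
  have hZ_le := gammaZg_rookGraph_le (α := Fin m) (β := Fin n)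
  have hZ_ge := min_le_gammaZg_rookGraph (α := Fin m) (β := Fin n)
  have hL_le := gammaLg_rookGraph_le (α := Fin m) (β := Fin n)
  have hL_ge := min_le_gammaLg_rookGraph (α := Fin m) (β := Fin n)
  simp only [Fintype.card_fin] at hZ_le hZ_ge hL_le hL_ge
  change gammaZg (rookGraph (Fin m) (Fin n)) = _ ∧ gammaLg (rookGraph (Fin m) (Fin n)) = _
  omega

end ZGamePaper
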